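/- If every pair of distinct points in a set C ⊂ R^n has Euclidean distance greater than 2√(nN), then for any L distinct points x_1,...,x_L ∈ C the squared Chebyshev radius satisfies rad²(x_1,...,x_L) ≥ (2(L−1)/L)·nN. Consequently, a sphere packing with minimum distance exceeding 2√(nN) is an (L−1)-multiple packing with radius √(nN') for any N' < 2(L−1)N/L. -/

import Mathlib

/-!
Centre the `L` points at an arbitrary `y`. The parallel-axis identity
`∑ᵢ ∑ⱼ ‖xᵢ - xⱼ‖² = 2L ∑ᵢ ‖xᵢ - y‖² - 2‖∑ᵢ (xᵢ - y)‖²` bounds the `L(L-1)` off-diagonal squared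
distances, each exceeding `4nN`, by `2L²` times the largest `‖xᵢ - y‖²`.
-/

open Finset

theorem sum_le_card_mul_iSup {ι : Type*} [Fintype ι] (f : ι → ℝ) :
    ∑ i, f i ≤ Fintype.card ι * ⨆ i, f i := by
  simpa using sum_le_card_nsmul univ f _ fun i _ => le_ciSup (Set.finite_range f).bddAbove i

section ChebyshevRadius

variable {E ι : Type*} [NormedAddCommGroup E] [InnerProductSpace ℝ E] [Fintype ι]

theorem sum_sum_norm_sub_sq_eq (a : ι → E) :
    ∑ i, ∑ j, ‖a i - a j‖ ^ 2 =
      2 * Fintype.card ι * ∑ i, ‖a i‖ ^ 2 - 2 * ‖∑ i, a i‖ ^ 2 := by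
  rw [← real_inner_self_eq_norm_sq (∑ i, a i), sum_inner]
  simp_rw [inner_sum, norm_sub_sq_real, sum_add_distrib, sum_sub_distrib, sum_const, card_univ,
    nsmul_eq_mul, ← mul_sum]
  ring

theorem sum_sum_norm_sub_sq_le (a : ι → E) (y : E) :
    ∑ i, ∑ j, ‖a i - a j‖ ^ 2 ≤ 2 * Fintype.card ι * ∑ i, ‖a i - y‖ ^ 2 := by
  have h := sum_sum_norm_sub_sq_eq fun i => a i - y
  simp only [sub_sub_sub_cancel_right] at h
  linarith [sq_nonneg ‖∑ i, (a i - y)‖]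

theorem card_mul_card_sub_one_mul_le_sum_sum [DecidableEq ι] {f : ι → ι → ℝ} {D : ℝ}
    (hf : ∀ i, 0 ≤ f i i) (hD : ∀ i j, i ≠ j → D ≤ f i j) :
    Fintype.card ι * (Fintype.card ι - 1) * D ≤ ∑ i, ∑ j, f i j := by
  have hrow : ∀ i, (Fintype.card ι - 1) * D ≤ ∑ j, f i j := by
    intro i
    rw [← add_sum_erase _ _ (mem_univ i)]
    have hcard : ((univ.erase i).card : ℝ) = Fintype.card ι - 1 := by
      rw [card_erase_of_mem (mem_univ i), card_univ,
        Nat.cast_pred (Fintype.card_pos_iff.mpr ⟨i⟩)]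
    have := card_nsmul_le_sum (univ.erase i) (f i) D fun j hj => hD i j (ne_of_mem_erase hj).symm
    rw [nsmul_eq_mul, hcard] at this
    linarith [hf i]
  calc Fintype.card ι * (Fintype.card ι - 1) * D = ∑ _i : ι, (Fintype.card ι - 1) * D := by
        rw [sum_const, card_univ, nsmul_eq_mul, mul_assoc]
    _ ≤ ∑ i, ∑ j, f i j := sum_le_sum fun i _ => hrow i

theorem le_iInf_iSup_norm_sub_sq [Nonempty ι] {a : ι → E} {D : ℝ}
    (hD : ∀ i j, i ≠ j → D ≤ ‖a i - a j‖ ^ 2) :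
    (Fintype.card ι - 1) / (2 * Fintype.card ι) * D ≤ ⨅ y, ⨆ i, ‖a i - y‖ ^ 2 := by
  classical
  refine le_ciInf fun y => ?_
  have hcard : (0 : ℝ) < Fintype.card ι := by exact_mod_cast Fintype.card_pos
  have hlow := card_mul_card_sub_one_mul_le_sum_sum (f := fun i j => ‖a i - a j‖ ^ 2)
    (fun i => sq_nonneg _) hD
  have hup := sum_sum_norm_sub_sq_le a y
  have hsup := sum_le_card_mul_iSup fun i => ‖a i - y‖ ^ 2
  rw [div_mul_eq_mul_div, div_le_iff₀ (by positivity)]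
  nlinarith

end ChebyshevRadius

theorem four_mul_le_sq_of_two_mul_sqrt_lt {r t : ℝ} (hr : 0 ≤ r) (h : 2 * √r < t) :
    4 * r ≤ t ^ 2 := by
  have := pow_le_pow_left₀ (by positivity) h.le 2
  rwa [mul_pow, Real.sq_sqrt hr, show (2 : ℝ) ^ 2 = 4 by norm_num] at this

/-- A sphere packing with minimum distance exceeding `2√(nN)` has every `L`-list of
squared Chebyshev radius at least `(2(L-1)/L)·nN`; consequently it is an
`(L-1)`-multiple packing with radius `√(nN')` for any `N' < 2(L-1)N/L`. -/
theorem sphere_packing_to_multiple_packing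
    (n L : ℕ) (N : ℝ) (hN : 0 < N) (hn : 1 ≤ n) (hL : 2 ≤ L)
    (C : Set (EuclideanSpace ℝ (Fin n)))
    (hC : ∀ x ∈ C, ∀ y ∈ C, x ≠ y → 2 * Real.sqrt (n * N) < ‖x - y‖)
    (x : Fin L → EuclideanSpace ℝ (Fin n))
    (hx : ∀ i, x i ∈ C) (hinj : Function.Injective x) :
    2 * ((L : ℝ) - 1) / L * (n * N) ≤
      (⨅ y : EuclideanSpace ℝ (Fin n), ⨆ i : Fin L, ‖x i - y‖ ^ 2) ∧
    ∀ N' : ℝ, N' < 2 * ((L : ℝ) - 1) * N / L →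
      (n : ℝ) * N' < ⨅ y : EuclideanSpace ℝ (Fin n), ⨆ i : Fin L, ‖x i - y‖ ^ 2 := by
  have hsep : ∀ i j, i ≠ j → 4 * (n * N) ≤ ‖x i - x j‖ ^ 2 := fun i j hij =>
    four_mul_le_sq_of_two_mul_sqrt_lt (by positivity)
      (hC _ (hx i) _ (hx j) (hinj.ne hij))
  have : NeZero L := ⟨by omega⟩
  have hrad := le_iInf_iSup_norm_sub_sq hsep
  have hbound : 2 * ((L : ℝ) - 1) / L * (n * N) ≤
      ⨅ y : EuclideanSpace ℝ (Fin n), ⨆ i : Fin L, ‖x i - y‖ ^ 2 := by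
    convert hrad using 1
    rw [Fintype.card_fin]
    field_simp
    ring
  refine ⟨hbound, fun N' hN' => lt_of_lt_of_le ?_ hbound⟩
  have hnpos : (0 : ℝ) < n := by exact_mod_cast hn
  calc (n : ℝ) * N' < n * (2 * ((L : ℝ) - 1) * N / L) := by gcongr
    _ = 2 * ((L : ℝ) - 1) / L * (n * N) := by ring
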